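/- arXiv:1912.11320 — 10 statements merged into one kernel-verified Lean document; each statement's English description precedes it below -/
import Mathlib

section
/- For all moulds M, N, P : List Ω → k, one has (M ∘ N) ∘ P = M ∘ (N ∘ P); that is, mould composition is associative. (This expresses that mould composition is the convolution product of the incidence bialgebra of the Baez–Dolan construction on the monoid Ω.) -/
variable {Ω : Type*} [Monoid Ω] {k : Type*} [CommRing k]

/-- The mould product: `(M × N)(w) = ∑_{w = u ++ v} M(u) · N(v)`. -/
def mouldMul (M N : List Ω → k) : List Ω → k := fun w =>
  ∑ i ∈ Finset.range (w.length + 1), M (w.take i) * N (w.drop i)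

/-- The mould composition: `(M ∘ N)([]) = M([])` and, for `w` nonempty,
`(M ∘ N)(w) = ∑_{c : Composition |w|} (∏_b N(b)) · M(ν_c(w))`, where the product is
over the blocks `b` of `w` cut according to `c`, and `ν_c(w)` is the list of block
norms (the products in `Ω` of the entries of each block). -/
def mouldComp (M N : List Ω → k) : List Ω → k := fun w =>
  if w.length = 0 then M [] else
    ∑ c : Composition w.length,
      ((w.splitWrtComposition c).map N).prod *
        M ((w.splitWrtComposition c).map List.prod)

/-!
Expanding both sides once more, `((M ∘ N) ∘ P)(w)` becomes a sum over pairs `(a, b)` with `a` a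
composition of `|w|` and `b` a composition of `a.length`, and `(M ∘ (N ∘ P))(w)` a sum over
compositions `c` of `|w|` together with a composition of each block of `c`. Mathlib's
`Composition.sigmaEquivSigmaPi` (`c = a.gather b`, refined inside each block by `a`) is a
bijection between the two index sets, and matched terms agree: both only depend on the two-level
splitting `(w.splitWrtComposition a).splitWrtComposition b`, and on it they coincide because the
norm of a concatenation is the product of the norms.
-/

namespace List

variable {α β : Type*}

theorem map_splitWrtComposition (f : α → β) (l : List α) {n : ℕ} (c : Composition n) :
    (l.map f).splitWrtComposition c = (l.splitWrtComposition c).map (map f) := by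
  unfold splitWrtComposition
  induction c.blocks generalizing l with
  | nil => simp [splitWrtCompositionAux]
  | cons m ns ih => simp [splitWrtCompositionAux_cons, map_take, ← map_drop, ih]

theorem flatten_splitWrtComposition_of_length_eq (l : List α) {n : ℕ} (c : Composition n)
    (h : l.length = n) : (l.splitWrtComposition c).flatten = l :=
  flatten_splitWrtCompositionAux (c.blocks_sum.trans h.symm)

theorem map_length_splitWrtComposition_of_length_eq (l : List α) {n : ℕ} (c : Composition n)
    (h : l.length = n) : (l.splitWrtComposition c).map length = c.blocks :=
  map_length_splitWrtCompositionAux (c.blocks_sum.trans h.symm).le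

theorem splitWrtComposition_eq_of_flatten_eq {l : List α} {n : ℕ} {c : Composition n}
    {L : List (List α)} (hL : L.flatten = l) (h : L.map length = c.blocks) :
    l.splitWrtComposition c = L := by
  have hl : l.length = n := by rw [← hL, length_flatten, h, c.blocks_sum]
  rw [eq_iff_flatten_eq, hL, flatten_splitWrtComposition_of_length_eq l c hl,
    map_length_splitWrtComposition_of_length_eq l c hl, h]
  exact ⟨rfl, rfl⟩

theorem prod_map_eq_prod_fin {M : Type*} [CommMonoid M] (f : α → M) {l : List α} {m : ℕ}
    (h : l.length = m) : (l.map f).prod = ∏ i : Fin m, f l[(i : ℕ)] := by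
  subst h
  exact (Fin.prod_univ_fun_getElem l f).symm

theorem length_getElem_splitWrtComposition (l : List α) {n : ℕ} (c : Composition n)
    (h : l.length = n) (i : Fin c.length) :
    (l.splitWrtComposition c)[(i : ℕ)].length = c.blocksFun i := by
  rw [← getElem_map length, getElem_of_eq (map_length_splitWrtComposition_of_length_eq l c h)]
  · rfl
  · simp

variable (w : List α) {n : ℕ} (a : Composition n) (b : Composition a.length)

theorem map_map_length_splitWrtComposition_splitWrtComposition (hw : w.length = n) :
    ((w.splitWrtComposition a).splitWrtComposition b).map (map length) =
      a.blocks.splitWrtComposition b := by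
  rw [← map_splitWrtComposition, map_length_splitWrtComposition_of_length_eq w a hw]

theorem splitWrtComposition_gather (hw : w.length = n) :
    w.splitWrtComposition (a.gather b) =
      ((w.splitWrtComposition a).splitWrtComposition b).map flatten := by
  apply splitWrtComposition_eq_of_flatten_eq
  · rw [← flatten_flatten, flatten_splitWrtComposition_of_length_eq _ b (by simp),
      flatten_splitWrtComposition_of_length_eq w a hw]
  · change _ = (a.blocks.splitWrtComposition b).map sum
    rw [map_map, ← map_map_length_splitWrtComposition_splitWrtComposition w a b hw, map_map]
    simp only [Function.comp_def, length_flatten]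

theorem splitWrtComposition_sigmaCompositionAux (hw : w.length = n)
    (i : Fin (a.gather b).length) :
    (w.splitWrtComposition (a.gather b))[(i : ℕ)].splitWrtComposition
        (a.sigmaCompositionAux b i) =
      ((w.splitWrtComposition a).splitWrtComposition b)[(i : ℕ)]'(by
        simpa [Composition.length_gather] using i.2) := by
  apply splitWrtComposition_eq_of_flatten_eq
  · rw [getElem_of_eq (splitWrtComposition_gather w a b hw), getElem_map]
  · rw [← getElem_map (map length),
      getElem_of_eq (map_map_length_splitWrtComposition_splitWrtComposition w a b hw)]
    · rfl
    · simpa [Composition.length_gather] using i.2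

end List

open List

def mouldCompTerm (M N : List Ω → k) (L : List (List Ω)) : k :=
  (L.map N).prod * M (L.map prod)

theorem mouldComp_eq_sum (M N : List Ω → k) {w : List Ω} {n : ℕ} (hw : w.length = n)
    (hn : n ≠ 0) :
    mouldComp M N w = ∑ c : Composition n, mouldCompTerm M N (w.splitWrtComposition c) := by
  subst hw
  exact if_neg hn

theorem mouldCompTerm_assoc (M N P : List Ω → k) (U : List (List (List Ω))) :
    (U.flatten.map P).prod * mouldCompTerm M N (U.map (map prod)) =
      (U.map (mouldCompTerm N P)).prod * M ((U.map flatten).map prod) := by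
  unfold mouldCompTerm
  simp only [map_flatten, prod_flatten, prod_map_mul, map_map, Function.comp_def]
  ring

theorem mouldComp_mouldComp_eq_sum_sigma (M N P : List Ω → k) {w : List Ω}
    (hw : w.length ≠ 0) :
    mouldComp (mouldComp M N) P w =
      ∑ x : Σ a : Composition w.length, Composition a.length,
        (((w.splitWrtComposition x.1).splitWrtComposition x.2).flatten.map P).prod *
          mouldCompTerm M N (((w.splitWrtComposition x.1).splitWrtComposition x.2).map
            (map prod)) := by
  rw [mouldComp_eq_sum _ _ rfl hw, ← Finset.univ_sigma_univ, Finset.sum_sigma]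
  refine Finset.sum_congr rfl fun a _ => ?_
  have hlen : ((w.splitWrtComposition a).map prod).length = a.length := by simp
  rw [mouldCompTerm, mouldComp_eq_sum M N hlen (a.length_pos_of_pos (Nat.pos_of_ne_zero hw)).ne',
    Finset.mul_sum]
  refine Finset.sum_congr rfl fun b _ => ?_
  rw [map_splitWrtComposition, flatten_splitWrtComposition_of_length_eq _ b (by simp)]

theorem mouldComp_mouldComp_eq_sum_sigmaPi (M N P : List Ω → k) {w : List Ω}
    (hw : w.length ≠ 0) :
    mouldComp M (mouldComp N P) w =
      ∑ y : Σ c : Composition w.length, ∀ i : Fin c.length, Composition (c.blocksFun i),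
        (∏ i : Fin y.1.length,
          mouldCompTerm N P
            ((w.splitWrtComposition y.1)[(i : ℕ)].splitWrtComposition (y.2 i))) *
        M ((w.splitWrtComposition y.1).map prod) := by
  rw [mouldComp_eq_sum _ _ rfl hw, ← Finset.univ_sigma_univ, Finset.sum_sigma]
  refine Finset.sum_congr rfl fun c _ => ?_
  rw [mouldCompTerm, prod_map_eq_prod_fin _ (length_splitWrtComposition w c),
    Finset.prod_congr rfl fun i _ => mouldComp_eq_sum N P
      (length_getElem_splitWrtComposition w c rfl i)
      (Nat.one_le_iff_ne_zero.mp (c.one_le_blocksFun i)),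
    Finset.prod_univ_sum, Fintype.piFinset_univ, Finset.sum_mul]

/-- Mould composition is associative. -/
theorem mouldComp_assoc (M N P : List Ω → k) :
    mouldComp (mouldComp M N) P = mouldComp M (mouldComp N P) := by
  funext w
  by_cases hw : w.length = 0
  · simp [mouldComp, hw]
  rw [mouldComp_mouldComp_eq_sum_sigma M N P hw, mouldComp_mouldComp_eq_sum_sigmaPi M N P hw,
    ← (Composition.sigmaEquivSigmaPi w.length).sum_comp]
  refine Finset.sum_congr rfl fun ⟨a, b⟩ _ => ?_
  have hU : ((w.splitWrtComposition a).splitWrtComposition b).length = (a.gather b).length := by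
    simp [Composition.length_gather]
  rw [mouldCompTerm_assoc, prod_map_eq_prod_fin _ hU]
  congr 1
  · exact Finset.prod_congr rfl fun i _ =>
      congrArg _ (splitWrtComposition_sigmaCompositionAux w a b rfl i).symm
  · rw [← splitWrtComposition_gather w a b rfl]
    rfl
end

section
/- Let G be a finite group acting on a finite type X. Then, in ℚ, ∑_{ω : Quotient (MulAction.orbitRel G X)} 1 / |MulAction.stabilizer G (representative of ω)| = |X| / |G|. In other words, the homotopy cardinality of the homotopy quotient X/G (the action groupoid, whose components are the orbits and whose automorphism groups are the stabilizers) equals ‖X‖/‖G‖. -/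
open scoped Classical

namespace MulAction

variable {G X : Type*} [Group G] [MulAction G X]

theorem one_div_card_stabilizer_eq_card_orbit_div_card {K : Type*} [Field K] [CharZero K]
    [Finite G] (x : X) :
    (1 : K) / Nat.card (stabilizer G x) = Nat.card (orbit G x) / Nat.card G := by
  have hindex : (stabilizer G x).index = Nat.card (orbit G x) :=
    (Nat.card_congr (orbitEquivQuotientStabilizer G x)).symm
  have horbit_stabilizer :
      (Nat.card (orbit G x) : K) * Nat.card (stabilizer G x) = Nat.card G := by
    exact_mod_cast hindex ▸ (stabilizer G x).index_mul_card
  have hG : (Nat.card G : K) ≠ 0 := by exact_mod_cast Nat.card_pos.ne'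
  have hstab : (Nat.card (stabilizer G x) : K) ≠ 0 := by exact_mod_cast Nat.card_pos.ne'
  rw [eq_div_iff hG, ← horbit_stabilizer]
  field_simp

theorem card_eq_sum_card_orbit_out [Fintype X] [Fintype (Quotient (orbitRel G X))] :
    Nat.card X = ∑ ω : Quotient (orbitRel G X), Nat.card (orbit G ω.out) := by
  rw [Nat.card_congr (selfEquivSigmaOrbits G X), Nat.card_sigma]

end MulAction

/-- Homotopy cardinality of a homotopy quotient: for a finite group `G` acting on a
finite type `X`, the sum over the orbits of the reciprocals of the orders of the
stabilizers equals `|X| / |G|`. -/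
theorem homotopy_cardinality_quotient (G X : Type*) [Group G] [Fintype G]
    [MulAction G X] [Fintype X] :
    ∑ ω : Quotient (MulAction.orbitRel G X),
        (1 : ℚ) / (Nat.card (MulAction.stabilizer G ω.out)) =
      (Fintype.card X : ℚ) / (Fintype.card G) := by
  rw [← Nat.card_eq_fintype_card, ← Nat.card_eq_fintype_card,
    MulAction.card_eq_sum_card_orbit_out (G := G), Nat.cast_sum, Finset.sum_div]
  exact Finset.sum_congr rfl fun ω _ =>
    MulAction.one_div_card_stabilizer_eq_card_orbit_div_card ω.out
end

section
/- Active and inert maps in the simplex category admit pushouts along each other, and the resulting maps are again active and inert: given an active morphism a : [m] ⟶ [n] and an inert morphism u : [m] ⟶ [k], there exist an object [p], an inert morphism u' : [n] ⟶ [p] and an active morphism a' : [k] ⟶ [p] with u' ∘ a = a' ∘ u, such that this commutative square is a pushout square in the simplex category. -/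
/-! An inert `u : [m] ⟶ [k]` is the translation `i ↦ b + i` with `b = u 0`, so `[k]` is `[m]` with
`b` points added below and `k - b - m` above. The pushout replaces that copy of `[m]` by `[n]`:
`p = k - m + n`, `u' j = b + j`, and `a'` is the identity on `[0, b)`, `i ↦ b + a (i - b)` on
`[b, b + m]` and `i ↦ i - m + n` above. Since `a'` maps each of these three blocks into the
corresponding block `[0, b)`, `[b, b + n]`, `(b + n, p]` of `[p]`, a cocone `(f, g)` descends to
the map that is `g` on the outer blocks and `f (· - b)` on the middle one; it is monotone at the
two seams because the cocone condition at `0` and at `m`, together with activity of `a`, gives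
`g b = f 0` and `f n = g (b + m)`. Uniqueness holds because `u'` and `a'` are jointly surjective. -/

open CategoryTheory SimplexCategory

/-- A morphism `f : [m] ⟶ [n]` in the simplex category is *active* if it preserves
the endpoints: `f 0 = 0` and `f m = n`. -/
def IsActive {m n : SimplexCategory} (f : m ⟶ n) : Prop :=
  f.toOrderHom 0 = 0 ∧ f.toOrderHom (Fin.last m.len) = Fin.last n.len

/-- A morphism `f : [m] ⟶ [n]` in the simplex category is *inert* if it preserves
distances: `f (i+1) = f i + 1` for all `0 ≤ i ≤ m - 1`. -/
def IsInert {m n : SimplexCategory} (f : m ⟶ n) : Prop :=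
  ∀ i : Fin m.len, (f.toOrderHom i.succ : ℕ) = (f.toOrderHom i.castSucc : ℕ) + 1

open Simplicial Limits

section Glue

variable {α β : Type*}

theorem Monotone.ite_lt [LinearOrder α] [Preorder β] {f g : α → β} {c : α} (hf : Monotone f)
    (hg : Monotone g) (hc : f c ≤ g c) :
    Monotone fun x => if x < c then f x else g x := by
  intro x y hxy
  dsimp only
  split_ifs with hx hy hy
  · exact hf hxy
  · exact (hf hx.le).trans (hc.trans (hg (not_lt.1 hy)))
  · exact absurd (hxy.trans_lt hy) hx
  · exact hg hxy

theorem Monotone.ite_le [LinearOrder α] [Preorder β] {f g : α → β} {c : α} (hf : Monotone f)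
    (hg : Monotone g) (hc : f c ≤ g c) :
    Monotone fun x => if x ≤ c then f x else g x := by
  intro x y hxy
  dsimp only
  split_ifs with hx hy hy
  · exact hf hxy
  · exact (hf hx).trans (hc.trans (hg (not_le.1 hy).le))
  · exact absurd (hxy.trans hy) hx
  · exact hg hxy

def glue (c d : ℕ) (L M H : ℕ → β) : ℕ → β := fun x =>
  if x < c then L x else if x ≤ c + d then M (x - c) else H (x - d)

variable {c d x : ℕ} {L M H : ℕ → β}

theorem glue_monotone [Preorder β] (hL : Monotone L) (hM : Monotone M)
    (hH : Monotone H) (h₀ : L c ≤ M 0) (h₁ : M d ≤ H c) : Monotone (glue c d L M H) := by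
  refine hL.ite_lt (Monotone.ite_le (hM.comp fun _ _ h => Nat.sub_le_sub_right h c)
    (hH.comp fun _ _ h => Nat.sub_le_sub_right h d) ?_) ?_
  · simpa using h₁
  · simpa using h₀

lemma glue_of_lt (h : x < c) : glue c d L M H x = L x := if_pos h

lemma glue_of_le_of_le (h₁ : c ≤ x) (h₂ : x ≤ c + d) : glue c d L M H x = M (x - c) :=
  (if_neg (not_lt.2 h₁)).trans (if_pos h₂)

lemma glue_of_lt' (h : c + d < x) : glue c d L M H x = H (x - d) :=
  (if_neg (by omega)).trans (if_neg (not_le.2 h))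

end Glue

namespace SimplexCategory

variable {m n k X : SimplexCategory}

def Hom.extend (f : m ⟶ n) (i : ℕ) : Fin (n.len + 1) := f.toOrderHom (Fin.clamp i m.len)

lemma Hom.extend_monotone (f : m ⟶ n) : Monotone f.extend :=
  f.toOrderHom.monotone.comp Fin.clamp_monotone

lemma Hom.extend_of_le (f : m ⟶ n) {i : ℕ} (hi : i ≤ m.len) :
    f.extend i = f.toOrderHom ⟨i, Nat.lt_succ_of_le hi⟩ := by
  simp [Hom.extend, Fin.clamp, hi]

@[simp]
lemma Hom.extend_val (f : m ⟶ n) (i : Fin (m.len + 1)) : f.extend i = f.toOrderHom i :=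
  f.extend_of_le i.is_le

def homOfMonotone (m : SimplexCategory) (F : ℕ → Fin (n.len + 1)) (hF : Monotone F) : m ⟶ n :=
  Hom.mk ⟨fun i => F i, fun _ _ h => hF h⟩

@[simp]
lemma homOfMonotone_apply (F : ℕ → Fin (n.len + 1)) (hF : Monotone F) (i : Fin (m.len + 1)) :
    (homOfMonotone m F hF).toOrderHom i = F i := rfl

lemma IsInert.val_apply {u : m ⟶ k} (hu : IsInert u) (i : Fin (m.len + 1)) :
    (u.toOrderHom i : ℕ) = u.toOrderHom 0 + i := by
  induction i using Fin.induction with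
  | zero => simp
  | succ i ih => rw [hu i, ih, Fin.val_succ, Fin.val_castSucc, add_assoc]

lemma IsInert.add_len_le {u : m ⟶ k} (hu : IsInert u) :
    (u.toOrderHom 0 : ℕ) + m.len ≤ k.len := by
  have h := (u.toOrderHom (Fin.last m.len)).is_le
  rwa [hu.val_apply, Fin.val_last] at h

lemma IsInert.val_extend {u : m ⟶ k} (hu : IsInert u) {j : ℕ} (hj : j ≤ m.len) :
    (u.extend j : ℕ) = u.toOrderHom 0 + j := by
  rw [u.extend_of_le hj, hu.val_apply]

lemma IsActive.extend_zero {a : m ⟶ n} (ha : IsActive a) : a.extend 0 = 0 :=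
  (a.extend_val 0).trans ha.1

lemma IsActive.extend_len {a : m ⟶ n} (ha : IsActive a) : a.extend m.len = Fin.last n.len :=
  (a.extend_val (Fin.last m.len)).trans ha.2

lemma hom_ext_of_jointly_surjective {Y Z P : SimplexCategory} {i : Y ⟶ P} {j : Z ⟶ P}
    (hij : ∀ x, (∃ y, i.toOrderHom y = x) ∨ ∃ z, j.toOrderHom z = x) {φ ψ : P ⟶ X}
    (h₁ : i ≫ φ = i ≫ ψ) (h₂ : j ≫ φ = j ≫ ψ) : φ = ψ := by
  ext x : 3
  obtain ⟨y, rfl⟩ | ⟨z, rfl⟩ := hij x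
  · exact congrArg (fun χ => χ.toOrderHom y) h₁
  · exact congrArg (fun χ => χ.toOrderHom z) h₂

def pushoutInl (u : m ⟶ k) (n : SimplexCategory) : n ⟶ ⦋k.len - m.len + n.len⦌ :=
  homOfMonotone n (fun j => Fin.clamp (u.toOrderHom 0 + j) _)
    (Fin.clamp_monotone.comp fun _ _ h => Nat.add_le_add_left h _)

def pushoutInr (a : m ⟶ n) (u : m ⟶ k) : k ⟶ ⦋k.len - m.len + n.len⦌ :=
  homOfMonotone k
    (fun i => Fin.clamp (glue (u.toOrderHom 0) m.len id (fun j => u.toOrderHom 0 + a.extend j)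
      (· + n.len) i) _)
    (Fin.clamp_monotone.comp <| glue_monotone monotone_id
      (fun _ _ h => Nat.add_le_add_left (a.extend_monotone h) _)
      (fun _ _ h => Nat.add_le_add_right h _) (Nat.le_add_right _ _)
      (Nat.add_le_add_left (a.extend m.len).is_le _))

def pushoutDesc (u : m ⟶ k) {f : n ⟶ X} {g : k ⟶ X}
    (h₀ : g.extend (u.toOrderHom 0) ≤ f.extend 0)
    (h₁ : f.extend n.len ≤ g.extend (u.toOrderHom 0 + m.len)) : ⦋k.len - m.len + n.len⦌ ⟶ X :=
  homOfMonotone _ (glue (u.toOrderHom 0) n.len g.extend f.extend (fun j => g.extend (j + m.len)))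
    (glue_monotone g.extend_monotone f.extend_monotone
      (g.extend_monotone.comp fun _ _ h => Nat.add_le_add_right h _) h₀ h₁)

section

variable {a : m ⟶ n} {u : m ⟶ k}

lemma extend_extend_eq_of_comm {f : n ⟶ X} {g : k ⟶ X} (hu : IsInert u) (w : a ≫ f = u ≫ g)
    {j : ℕ} (hj : j ≤ m.len) : f.extend (a.extend j) = g.extend (u.toOrderHom 0 + j) := by
  rw [a.extend_of_le hj, f.extend_val, ← hu.val_extend hj, u.extend_of_le hj, g.extend_val]
  exact congrArg (fun φ => φ.toOrderHom ⟨j, Nat.lt_succ_of_le hj⟩) w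

lemma pushoutInl_val (hu : IsInert u) (j : Fin (n.len + 1)) :
    ((pushoutInl u n).toOrderHom j : ℕ) = u.toOrderHom 0 + j := by
  have := hu.add_len_le
  have := j.is_le
  simp only [SimplexCategory.pushoutInl, homOfMonotone_apply, Fin.coe_clamp, len_mk]
  omega

lemma pushoutInr_val (hu : IsInert u) (i : Fin (k.len + 1)) :
    ((pushoutInr a u).toOrderHom i : ℕ) =
      glue (u.toOrderHom 0) m.len id (fun j => u.toOrderHom 0 + a.extend j) (· + n.len) i := by
  have := hu.add_len_le
  have := i.is_le
  have := (a.extend (i - u.toOrderHom 0)).is_le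
  simp only [SimplexCategory.pushoutInr, homOfMonotone_apply, Fin.coe_clamp, len_mk, glue, id]
  split_ifs <;> omega

lemma IsInert.pushoutInl (hu : IsInert u) : IsInert (pushoutInl u n) := by
  intro i
  rw [pushoutInl_val hu, pushoutInl_val hu, Fin.val_succ, Fin.val_castSucc, add_assoc]

lemma IsActive.pushoutInr (ha : IsActive a) (hu : IsInert u) : IsActive (pushoutInr a u) := by
  have := hu.add_len_le
  constructor <;> ext <;> rw [pushoutInr_val hu]
  · rw [Fin.val_zero]
    rcases Nat.eq_zero_or_pos (u.toOrderHom 0 : ℕ) with hb | hb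
    · rw [glue_of_le_of_le hb.le (Nat.zero_le _), hb, Nat.sub_zero, ha.extend_zero]
      rfl
    · exact glue_of_lt hb
  · simp only [Fin.val_last, len_mk]
    rcases this.lt_or_eq with hlt | heq
    · rw [glue_of_lt' hlt]
    · have hk : k.len - u.toOrderHom 0 = m.len := by omega
      rw [glue_of_le_of_le (by omega) heq.ge, hk, ha.extend_len, Fin.val_last]
      omega

lemma pushout_condition (hu : IsInert u) : a ≫ pushoutInl u n = u ≫ pushoutInr a u := by
  ext i : 4
  simp only [comp_toOrderHom, OrderHom.comp_coe, Function.comp_apply]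
  have := i.is_le
  rw [pushoutInl_val hu, pushoutInr_val hu, hu.val_apply i, glue_of_le_of_le (by omega) (by omega),
    Nat.add_sub_cancel_left, a.extend_val]

lemma pushout_jointly_surjective (hu : IsInert u) (x : Fin (k.len - m.len + n.len + 1)) :
    (∃ j, (pushoutInl u n).toOrderHom j = x) ∨ ∃ i, (pushoutInr a u).toOrderHom i = x := by
  have := x.is_le
  have := hu.add_len_le
  rcases lt_or_ge (x : ℕ) (u.toOrderHom 0) with h | h
  · exact .inr ⟨⟨x, by omega⟩, Fin.ext (by rw [pushoutInr_val hu, glue_of_lt h]; rfl)⟩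
  rcases le_or_gt (x : ℕ) (u.toOrderHom 0 + n.len) with h' | h'
  · refine .inl ⟨⟨x - u.toOrderHom 0, by omega⟩, Fin.ext ?_⟩
    rw [pushoutInl_val hu]
    dsimp only
    omega
  · refine .inr ⟨⟨x - n.len + m.len, by omega⟩, Fin.ext ?_⟩
    rw [pushoutInr_val hu]
    dsimp only
    rw [glue_of_lt' (by omega)]
    omega

variable {f : n ⟶ X} {g : k ⟶ X} {h₀ : g.extend (u.toOrderHom 0) ≤ f.extend 0}
  {h₁ : f.extend n.len ≤ g.extend (u.toOrderHom 0 + m.len)}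

lemma pushoutInl_desc (hu : IsInert u) : pushoutInl u n ≫ pushoutDesc u h₀ h₁ = f := by
  ext j : 3
  simp only [comp_toOrderHom, OrderHom.comp_coe, Function.comp_apply, SimplexCategory.pushoutDesc,
    homOfMonotone_apply]
  have := j.is_le
  rw [pushoutInl_val hu, glue_of_le_of_le (by omega) (by omega), Nat.add_sub_cancel_left,
    f.extend_val]

lemma pushoutInr_desc (hu : IsInert u) (w : a ≫ f = u ≫ g) :
    pushoutInr a u ≫ pushoutDesc u h₀ h₁ = g := by
  ext i : 3
  simp only [comp_toOrderHom, OrderHom.comp_coe, Function.comp_apply, SimplexCategory.pushoutDesc,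
    homOfMonotone_apply]
  have := i.is_le
  have := (a.extend (i - u.toOrderHom 0)).is_le
  rw [pushoutInr_val hu, ← g.extend_val]
  rcases lt_or_ge (i : ℕ) (u.toOrderHom 0) with h | h
  · rw [glue_of_lt h, id, glue_of_lt h]
  rcases le_or_gt (i : ℕ) (u.toOrderHom 0 + m.len) with h' | h'
  · rw [glue_of_le_of_le h h', glue_of_le_of_le (by omega) (by omega), Nat.add_sub_cancel_left,
      extend_extend_eq_of_comm hu w (by omega), Nat.add_sub_cancel' h]
  · rw [glue_of_lt' h', glue_of_lt' (by omega)]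
    exact congrArg g.extend (by omega)

theorem isPushout_pushoutInl_pushoutInr (ha : IsActive a) (hu : IsInert u) :
    IsPushout a u (pushoutInl u n) (pushoutInr a u) := by
  have bounds (s : PushoutCocone a u) : s.inr.extend (u.toOrderHom 0) ≤ s.inl.extend 0 ∧
      s.inl.extend n.len ≤ s.inr.extend (u.toOrderHom 0 + m.len) := by
    have h0 := extend_extend_eq_of_comm hu s.condition (Nat.zero_le _)
    have hm := extend_extend_eq_of_comm hu s.condition le_rfl
    rw [ha.extend_zero] at h0
    rw [ha.extend_len] at hm
    exact ⟨h0.ge, hm.le⟩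
  refine IsPushout.of_isColimit (PushoutCocone.IsColimit.mk (pushout_condition hu)
    (fun s => pushoutDesc u (bounds s).1 (bounds s).2) (fun _ => pushoutInl_desc hu)
    (fun s => pushoutInr_desc hu s.condition) fun s φ hφ₁ hφ₂ => ?_)
  exact hom_ext_of_jointly_surjective (pushout_jointly_surjective hu)
    (hφ₁.trans (pushoutInl_desc hu).symm) (hφ₂.trans (pushoutInr_desc hu s.condition).symm)

end

end SimplexCategory

/-- Active and inert maps in the simplex category admit pushouts along each other,
and the resulting maps are again active and inert. -/
theorem active_inert_pushout {m n k : SimplexCategory}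
    (a : m ⟶ n) (ha : IsActive a) (u : m ⟶ k) (hu : IsInert u) :
    ∃ (p : SimplexCategory) (u' : n ⟶ p) (a' : k ⟶ p),
      IsInert u' ∧ IsActive a' ∧ IsPushout a u u' a' :=
  ⟨_, _, _, hu.pushoutInl, ha.pushoutInr hu, isPushout_pushoutInl_pushoutInr ha hu⟩
end

section
/- Let 𝒜 be the category whose objects are natural numbers and whose morphisms m → n are the injective monotone maps f : Fin(m+1) → Fin(n+1) with f(0) = 0 and f(m) = n (the active injections of the simplex category), and let 𝒮 be the category whose objects are natural numbers and whose morphisms n → m are the surjective monotone maps Fin n → Fin m (the surjections of the augmented simplex category, including the empty ordinal). Then the opposite category 𝒜ᵒᵖ is equivalent to 𝒮, the object m of 𝒜 corresponding to the m-element ordinal. -/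
open CategoryTheory

/-- The category whose objects are natural numbers, an object `m` standing for the
ordinal `[m] = {0 < 1 < ⋯ < m}`, and whose morphisms `m ⟶ n` are the injective
monotone maps `Fin (m+1) → Fin (n+1)` preserving the endpoints (the active
injections of the simplex category). -/
structure ActiveInjCat where
  n : ℕ

instance : Category ActiveInjCat where
  Hom m n := {f : Fin (m.n + 1) →o Fin (n.n + 1) //
    Function.Injective f ∧ f 0 = 0 ∧ f (Fin.last m.n) = Fin.last n.n}
  id m := ⟨OrderHom.id, fun _ _ h => h, rfl, rfl⟩
  comp f g := ⟨g.1.comp f.1, g.2.1.comp f.2.1,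
    by show g.1 (f.1 0) = 0; rw [f.2.2.1, g.2.2.1],
    by show g.1 (f.1 (Fin.last _)) = Fin.last _; rw [f.2.2.2, g.2.2.2]⟩

/-- The category whose objects are natural numbers, an object `n` standing for the
`n`-element ordinal `Fin n` (including the empty ordinal), and whose morphisms
`n ⟶ m` are the surjective monotone maps `Fin n → Fin m` (the surjections of the
augmented simplex category). -/
structure SurjCat where
  n : ℕ

instance : Category SurjCat where
  Hom m n := {f : Fin m.n →o Fin n.n // Function.Surjective f}
  id m := ⟨OrderHom.id, fun x => ⟨x, rfl⟩⟩
  comp f g := ⟨g.1.comp f.1, g.2.comp f.2⟩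

/-!
An active injection `f : [a] → [b]` and a surjection `g : Fin b → Fin a` determine each other
through `f j ≤ i ↔ j ≤ g i`: `f j` is the first element of the fibre of `g` over `j`, and `g i` is
the last `j` with `f j ≤ i`. Injectivity of `f` matches surjectivity of `g`, and the relation is
compatible with composition, so `f ↦ g` is a fully faithful functor `𝒜ᵒᵖ ⥤ 𝒮` which is bijective
on objects.
-/

open Finset

section IsDual

variable {a b c : ℕ}

/-- Extending `g` by `b ↦ a`, this says that `f` is left adjoint to `g` as a map of posets. -/
def IsDual (f : Fin (a + 1) → Fin (b + 1)) (g : Fin b → Fin a) : Prop :=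
  ∀ (j : Fin (a + 1)) (i : Fin b), (f j : ℕ) ≤ i ↔ (j : ℕ) ≤ g i

lemma isDual_id : IsDual (id : Fin (a + 1) → Fin (a + 1)) id := fun _ _ => Iff.rfl

variable {f f' : Fin (a + 1) → Fin (b + 1)} {g g' : Fin b → Fin a}

lemma IsDual.comp {f₂ : Fin (b + 1) → Fin (c + 1)} {g₂ : Fin c → Fin b}
    (h : IsDual f g) (h₂ : IsDual f₂ g₂) : IsDual (f₂ ∘ f) (g ∘ g₂) :=
  fun j i => (h₂ (f j) i).trans (h j (g₂ i))

lemma IsDual.unique_right (h : IsDual f g) (h' : IsDual f g') : g = g' := by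
  funext i
  have hle : ∀ {g g'}, IsDual f g → IsDual f g' → (g i : ℕ) ≤ g' i :=
    fun {g _} h h' => (h' (g i).castSucc i).1 ((h _ i).2 le_rfl)
  exact Fin.ext (le_antisymm (hle h h') (hle h' h))

lemma IsDual.unique_left (h : IsDual f g) (h' : IsDual f' g) : f = f' := by
  funext j
  have hle : ∀ {f f'}, IsDual f g → IsDual f' g → (f j : ℕ) ≤ f' j := fun {f f'} h h' => by
    by_contra! hlt
    have hb : (f' j : ℕ) < b := hlt.trans_le (Nat.lt_succ_iff.1 (f j).isLt)
    exact hlt.not_ge ((h j ⟨_, hb⟩).2 ((h' j ⟨_, hb⟩).1 le_rfl))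
  exact Fin.ext (le_antisymm (hle h h') (hle h' h))

lemma IsDual.monotone_right (h : IsDual f g) : Monotone g := fun i i' hii' =>
  Fin.le_def.2 <| (h (g i).castSucc i').1 <| ((h _ i).2 le_rfl).trans hii'

lemma IsDual.left_zero (h : IsDual f g) : f 0 = 0 := by
  rcases Nat.eq_zero_or_pos b with rfl | hb
  · exact Fin.ext (Nat.lt_one_iff.1 (f 0).isLt)
  · exact Fin.ext (Nat.le_zero.1 ((h 0 ⟨0, hb⟩).2 (Nat.zero_le _)))

lemma IsDual.left_last (h : IsDual f g) : f (Fin.last a) = Fin.last b := by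
  refine Fin.ext (le_antisymm (Nat.lt_succ_iff.1 (f _).isLt) (not_lt.1 fun hlt => ?_))
  have hi := (h (Fin.last a) ⟨f (Fin.last a), hlt⟩).1 le_rfl
  exact (g _).isLt.not_ge hi

lemma IsDual.surjective_right (h : IsDual f g) (hf : StrictMono f) : Function.Surjective g := by
  intro j
  have hlt : (f j.castSucc : ℕ) < f j.succ := hf Fin.castSucc_lt_succ
  -- the fibre over `j` ends just below `f (j + 1)`
  let i : Fin b := ⟨f j.succ - 1, by have := (f j.succ).isLt; omega⟩
  have hge : (j : ℕ) ≤ g i := (h j.castSucc i).1 (by simp only [i]; omega)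
  have hlt' : ¬ (j : ℕ) + 1 ≤ g i := fun hle => by
    have := (h j.succ i).2 hle
    simp only [i] at this
    omega
  exact ⟨i, Fin.ext (by omega)⟩

lemma IsDual.strictMono_left (h : IsDual f g) (hg : Function.Surjective g) : StrictMono f := by
  intro j j' hjj'
  obtain ⟨i, hi⟩ := hg ⟨j, hjj'.trans_le (Fin.le_last j')⟩
  have hj : (f j : ℕ) ≤ i := (h j i).2 (by rw [hi])
  have hj' : ¬ (f j' : ℕ) ≤ i := fun hle => by
    have := (h j' i).1 hle
    rw [hi] at this
    exact this.not_gt hjj'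
  exact Fin.lt_def.2 (by omega)

end IsDual

namespace ActiveInjCat

variable {m n : ActiveInjCat}

lemma hom_ext {f f' : m ⟶ n} (h : ⇑f.1 = ⇑f'.1) : f = f' :=
  Subtype.ext (OrderHom.ext _ _ h)

lemma lt_card_filter_le_iff (f : m ⟶ n) (i : Fin n.n) (j : Fin (m.n + 1)) :
    (j : ℕ) < #{k | (f.1 k : ℕ) ≤ i} ↔ (f.1 j : ℕ) ≤ i :=
  Fin.lt_card_filter_univ_iff_apply_of_imp _ fun _ _ hle h => Nat.le_trans (f.1.monotone hle) h

lemma card_filter_le_pos (f : m ⟶ n) (i : Fin n.n) : 0 < #{k | (f.1 k : ℕ) ≤ i} :=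
  (lt_card_filter_le_iff f i 0).2 (by simp [f.2.2.1])

/-- `#{k | f k ≤ i} - 1` is the last `j` with `f j ≤ i`, since `{k | f k ≤ i}` is an initial
segment containing `0`. -/
def dual (f : m ⟶ n) (i : Fin n.n) : Fin m.n :=
  ⟨#{k | (f.1 k : ℕ) ≤ i} - 1, by
    have hpos := card_filter_le_pos f i
    have hle := (lt_card_filter_le_iff f i (Fin.last _)).not.2 (by simp [f.2.2.2])
    simp only [Fin.val_last, not_lt] at hle
    omega⟩

lemma isDual_dual (f : m ⟶ n) : IsDual f.1 (dual f) := fun j i => by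
  have hpos := card_filter_le_pos f i
  rw [← lt_card_filter_le_iff]
  dsimp only [dual]
  omega

end ActiveInjCat

namespace SurjCat

variable {m n : SurjCat}

lemma hom_ext {g g' : m ⟶ n} (h : ⇑g.1 = ⇑g'.1) : g = g' :=
  Subtype.ext (OrderHom.ext _ _ h)

/-- `j` goes to the first element of the fibre over `j`, i.e. to the number of elements in the
fibres below it. -/
def dual (g : m ⟶ n) (j : Fin (n.n + 1)) : Fin (m.n + 1) :=
  ⟨#{i | (g.1 i : ℕ) < j}, Nat.lt_succ_of_le ((card_filter_le _ _).trans_eq (card_fin _))⟩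

lemma isDual_dual (g : m ⟶ n) : IsDual (dual g) g.1 := fun _ i =>
  not_lt.symm.trans <| (Fin.lt_card_filter_univ_iff_apply_of_imp (j := i) _
    fun _ _ hle h => Nat.lt_of_le_of_lt (g.1.monotone hle) h).not.trans not_lt

def dualHom (g : m ⟶ n) : (⟨n.n⟩ : ActiveInjCat) ⟶ ⟨m.n⟩ :=
  have hmono := (isDual_dual g).strictMono_left g.2
  ⟨⟨dual g, hmono.monotone⟩, hmono.injective, (isDual_dual g).left_zero,
    (isDual_dual g).left_last⟩

end SurjCat

namespace ActiveInjCat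

variable {m n : ActiveInjCat}

def dualHom (f : m ⟶ n) : (⟨n.n⟩ : SurjCat) ⟶ ⟨m.n⟩ :=
  ⟨⟨dual f, (isDual_dual f).monotone_right⟩,
    (isDual_dual f).surjective_right (f.1.monotone.strictMono_of_injective f.2.1)⟩

def dualFunctor : ActiveInjCatᵒᵖ ⥤ SurjCat where
  obj m := ⟨m.unop.n⟩
  map f := dualHom f.unop
  map_id _ := SurjCat.hom_ext ((isDual_dual _).unique_right isDual_id)
  map_comp f g := SurjCat.hom_ext
    ((isDual_dual _).unique_right ((isDual_dual g.unop).comp (isDual_dual f.unop)))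

instance : dualFunctor.Faithful where
  map_injective {_ _ f f'} h := by
    have hdual : dual f.unop = dual f'.unop := congrArg DFunLike.coe (Subtype.ext_iff.1 h)
    refine Quiver.Hom.unop_inj (hom_ext ((isDual_dual f.unop).unique_left ?_))
    rw [hdual]
    exact isDual_dual f'.unop

instance : dualFunctor.Full where
  map_surjective g := ⟨(SurjCat.dualHom g).op,
    SurjCat.hom_ext ((isDual_dual _).unique_right (SurjCat.isDual_dual g))⟩

instance : dualFunctor.EssSurj where
  mem_essImage n := ⟨Opposite.op ⟨n.n⟩, ⟨Iso.refl _⟩⟩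

instance : dualFunctor.IsEquivalence where

end ActiveInjCat

/-- The opposite of the category of active injections of the simplex category is
equivalent to the category of finite ordinals (including the empty one) and
monotone surjections, the object `m` (i.e. the ordinal `[m]` with `m+1` elements)
corresponding to the `m`-element ordinal. -/
theorem activeInj_op_equiv_surj :
    ∃ e : ActiveInjCatᵒᵖ ≌ SurjCat,
      ∀ m : ActiveInjCat, (e.functor.obj (Opposite.op m)).n = m.n :=
  ⟨ActiveInjCat.dualFunctor.asEquivalence, fun _ => rfl⟩
end

section
/- (Fundamental lemma: composition of linear functors is given by pullback composition of spans; set-level.) Let I ←s M →t J and J ←u N →v K be spans of types, and let P = {(m, n) : M × N // t m = u n} be the pullback of t and u, with projections π₁ : P → M and π₂ : P → N. Then the composite of the associated linear functors, (Over.pullback s ⋙ Over.map t) ⋙ (Over.pullback u ⋙ Over.map v) : Over I ⥤ Over K, is naturally isomorphic to the linear functor of the composite span, Over.pullback (s ∘ π₁) ⋙ Over.map (v ∘ π₂). -/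
/-!
Base change along `u` of a pushforward along `t` is computed through the pullback square of `t`
and `u` (Beck–Chevalley): `u^* ∘ t_! ≅ π₂_! ∘ π₁^*`. Hence
`v_! u^* t_! s^* ≅ v_! π₂_! π₁^* s^* ≅ (v ∘ π₂)_! (s ∘ π₁)^*`, the last step because
pullback and postcomposition are pseudofunctorial.
-/

open CategoryTheory

universe u

/-- The pullback (base change) functor along a map of types. -/
noncomputable def Over.pullbackType {X Y : Type u} (f : X → Y) : Over Y ⥤ Over X :=
  Over.pullback (TypeCat.ofHom f : X ⟶ Y)

namespace CategoryTheory.Over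

open Limits

variable {C : Type*} [Category C] [HasPullbacks C]

noncomputable def spanFunctor {I M J : C} (s : M ⟶ I) (t : M ⟶ J) : Over I ⥤ Over J :=
  pullback s ⋙ map t

variable {P M N J : C} {p₁ : P ⟶ M} {p₂ : P ⟶ N} {t : M ⟶ J} {u : N ⟶ J}

theorem isPullback_pullbackFst_pullbackSnd_comp (h : IsPullback p₁ p₂ t u) (A : Over M) :
    IsPullback (pullback.fst A.hom p₁) (pullback.snd A.hom p₁ ≫ p₂) (A.hom ≫ t) u :=
  ((IsPullback.of_hasPullback A.hom p₁).flip.paste_horiz h.flip).flip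

noncomputable def pullbackMapIsoMapPullback (h : IsPullback p₁ p₂ t u) :
    pullback p₁ ⋙ map p₂ ≅ map t ⋙ pullback u :=
  NatIso.ofComponents
    (fun A => isoMk (isPullback_pullbackFst_pullbackSnd_comp h A).isoPullback (by simp))
    (fun {A B} k => by
      ext
      apply Limits.pullback.hom_ext
      all_goals simp only [Functor.comp_obj, Functor.comp_map, map_obj_hom, comp_left,
        map_map_left, pullback_map_left, isoMk_hom_left, Category.assoc,
        IsPullback.isoPullback_hom_fst, IsPullback.isoPullback_hom_snd]
      · erw [pullback.lift_fst, pullback.lift_fst]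
        simp
      · erw [pullback.lift_snd_assoc, pullback.lift_snd]
        simp)

noncomputable def spanFunctorCompIso {I K : C} (s : M ⟶ I) (v : N ⟶ K)
    (h : IsPullback p₁ p₂ t u) :
    spanFunctor s t ⋙ spanFunctor u v ≅ spanFunctor (p₁ ≫ s) (p₂ ≫ v) :=
  calc spanFunctor s t ⋙ spanFunctor u v
      ≅ pullback s ⋙ (map t ⋙ pullback u) ⋙ map v :=
        Functor.associator _ _ _ ≪≫ Functor.isoWhiskerLeft _ (Functor.associator _ _ _).symm
    _ ≅ pullback s ⋙ (pullback p₁ ⋙ map p₂) ⋙ map v :=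
        Functor.isoWhiskerLeft _ (Functor.isoWhiskerRight (pullbackMapIsoMapPullback h).symm _)
    _ ≅ (pullback s ⋙ pullback p₁) ⋙ map p₂ ⋙ map v :=
        Functor.isoWhiskerLeft _ (Functor.associator _ _ _) ≪≫ (Functor.associator _ _ _).symm
    _ ≅ spanFunctor (p₁ ≫ s) (p₂ ≫ v) :=
        Functor.isoWhiskerRight (pullbackComp p₁ s).symm _ ≪≫
          Functor.isoWhiskerLeft _ (mapComp p₂ v).symm

end CategoryTheory.Over

/-- Composition of linear functors is given by pullback composition of spans
(set-level): for spans `I ←s M →t J` and `J ←u N →v K`, the composite of the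
associated linear functors is naturally isomorphic to the linear functor of the
composite span obtained from the pullback `P = {(m,n) // t m = u n}`. -/
theorem linear_functor_comp_span {I M J N K : Type u}
    (s : M → I) (t : M → J) (u : N → J) (v : N → K) :
    Nonempty (((Over.pullbackType s ⋙ Over.map (TypeCat.ofHom t : M ⟶ J)) ⋙
        (Over.pullbackType u ⋙ Over.map (TypeCat.ofHom v : N ⟶ K))) ≅
      (Over.pullbackType (fun q : {q : M × N // t q.1 = u q.2} => s q.1.1) ⋙
        Over.map (TypeCat.ofHom (fun q : {q : M × N // t q.1 = u q.2} => v q.1.2) :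
          {q : M × N // t q.1 = u q.2} ⟶ K))) :=
  ⟨Over.spanFunctorCompIso (TypeCat.ofHom s) (TypeCat.ofHom v)
    (IsPullback.of_isLimit
      (Limits.Types.pullbackLimitCone (TypeCat.ofHom t) (TypeCat.ofHom u)).isLimit)⟩
end

section
/- (Every linear functor is given by a span; set-level.) Let S and T be types and let F : Over S ⥤ Over T be a functor between the slice categories of types that preserves all small coproducts. Then there exist a type M and maps s : M → S and t : M → T such that F is naturally isomorphic to Over.pullback s ⋙ Over.map t. -/
open CategoryTheory CategoryTheory.Limits

universe u

namespace LinearSpanAux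

variable {S T : Type u}

/-- The singleton object of `Over S` sitting over `a`. -/
def E (a : S) : Over S := Over.mk (TypeCat.ofHom fun _ : PUnit.{u+1} => a)

/-- Identification of singleton objects along an equality. -/
def eE {a b : S} (h : a = b) : E a ⟶ E b :=
  Over.homMk (TypeCat.ofHom id) (by ext x; exact h.symm)

lemma eE_rfl (a : S) : eE (rfl : a = a) = 𝟙 (E a) :=
  Over.OverMorphism.ext rfl

lemma eE_trans {a b c : S} (h : a = b) (h' : b = c) :
    eE h ≫ eE h' = eE (h.trans h') :=
  Over.OverMorphism.ext rfl

/-- Inclusion of a singleton into `X`. -/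
def ιh (X : Over S) (x : X.left) {a : S} (h : X.hom x = a) : E a ⟶ X :=
  Over.homMk (TypeCat.ofHom fun _ => x) (by ext y; exact h)

abbrev ι (X : Over S) (x : X.left) : E (X.hom x) ⟶ X := ιh X x rfl

lemma eE_comp_ιh {X Y : Over S} (f : X ⟶ Y) (x : X.left)
    (h : X.hom x = Y.hom (f.left x)) :
    eE h ≫ ι Y (f.left x) = ι X x ≫ f :=
  Over.OverMorphism.ext rfl

variable (F : Over S ⥤ Over T)

/-- The fiber family. -/
def Fam (a : S) : Type u := (F.obj (E a)).left

/-- Transport along `F` of an equality of fibers. -/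
def mapE {a b : S} (h : a = b) : Fam F a → Fam F b := (F.map (eE h)).left

lemma mapE_rfl {a : S} (m : Fam F a) : mapE F rfl m = m := by
  simp only [mapE, eE_rfl, F.map_id]; rfl

def Mid : Type u := Σ a : S, Fam F a

def sMap : Mid F → S := Sigma.fst

def tMap : Mid F → T := fun p => (F.obj (E p.1)).hom p.2

lemma mk_mapE {a b : S} (h : a = b) (m : Fam F a) :
    (⟨b, mapE F h m⟩ : Mid F) = ⟨a, m⟩ := by
  subst h; rw [mapE_rfl]

lemma hom_mapE {a b : S} (h : a = b) (m : Fam F a) :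
    (F.obj (E b)).hom (mapE F h m) = (F.obj (E a)).hom m :=
  ConcreteCategory.congr_hom (Over.w (F.map (eE h))) m

/-- The explicit span functor. -/
def P : Over S ⥤ Over T where
  obj X := Over.mk (TypeCat.ofHom fun p : Σ x : X.left, Fam F (X.hom x) => (F.obj (E (X.hom p.1))).hom p.2)
  map {X Y} f := Over.homMk
    (TypeCat.ofHom fun (p : Σ x : X.left, Fam F (X.hom x)) => (⟨f.left p.1, mapE F (ConcreteCategory.congr_hom (Over.w f) p.1).symm p.2⟩ : Σ y : Y.left, Fam F (Y.hom y)))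
    (by ext p; exact hom_mapE F _ p.2)
  map_id X := by
    apply Over.OverMorphism.ext
    ext p
    show (⟨p.1, mapE F rfl p.2⟩ : Σ x : X.left, Fam F (X.hom x)) = p
    rw [mapE_rfl]
    rfl
  map_comp {X Y Z} f g := by
    apply Over.OverMorphism.ext
    ext p
    show (⟨g.left (f.left p.1), mapE F _ p.2⟩ : Σ x : Z.left, Fam F (Z.hom x))
      = ⟨g.left (f.left p.1), mapE F _ (mapE F _ p.2)⟩
    refine congrArg (Sigma.mk _) ?_
    show mapE F _ p.2 = (F.map (eE _) ≫ F.map (eE _)).left p.2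
    rw [← F.map_comp]
    exact congrArg (fun k => (F.map k).left p.2) (eE_trans _ _).symm

/-- The comparison map from the explicit functor to `F`. -/
def theta : P F ⟶ F where
  app X := Over.homMk (TypeCat.ofHom fun (p : Σ x : X.left, Fam F (X.hom x)) => (F.map (ι X p.1)).left p.2)
    (by ext p; exact ConcreteCategory.congr_hom (Over.w (F.map (ι X p.1))) p.2)
  naturality {X Y} f := by
    apply Over.OverMorphism.ext
    ext p
    show (F.map (eE _) ≫ F.map (ι Y (f.left p.1))).left p.2
      = (F.map (ι X p.1) ≫ F.map f).left p.2
    rw [← F.map_comp, ← F.map_comp]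
    exact congrArg (fun k => (F.map k).left p.2) (eE_comp_ιh f p.1 _)

end LinearSpanAux

namespace LinearSpanAux

variable {S T : Type u}

section Colimit

variable (X : Over S)

/-- The cofan of singletons covering `X`. -/
def cfan : Cofan (fun x : X.left => E (X.hom x)) := Cofan.mk X (fun x => ι X x)

/-- The image of the singleton cofan under the forgetful functor is a colimit. -/
def cfanForgetIsColimit : IsColimit ((Over.forget S).mapCocone (cfan X)) where
  desc u := TypeCat.ofHom fun x => u.ι.app ⟨x⟩ PUnit.unit
  fac _ _ := by ext y; cases y; rfl
  uniq _ _ w := by ext x; exact ConcreteCategory.congr_hom (w ⟨x⟩) PUnit.unit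

/-- The singleton cofan is a colimit. -/
noncomputable def cfanIsColimit : IsColimit (cfan X) :=
  isColimitOfReflects (Over.forget S) (cfanForgetIsColimit X)

variable (F : Over S ⥤ Over T)

/-- The sigma cocone on the fibers. -/
def sigmaCocone :
    Cocone ((Discrete.functor fun x : X.left => E (X.hom x)) ⋙ F ⋙ Over.forget T) where
  pt := Σ x : X.left, Fam F (X.hom x)
  ι := Discrete.natTrans fun j => TypeCat.ofHom fun m => (⟨j.as, m⟩ : Σ x : X.left, Fam F (X.hom x))

/-- The sigma cocone is a colimit. -/
def sigmaIsColimit : IsColimit (sigmaCocone X F) where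
  desc u := TypeCat.ofHom fun (p : Σ x : X.left, Fam F (X.hom x)) => u.ι.app ⟨p.1⟩ p.2
  fac _ _ := rfl
  uniq _ _ w := by ext p; exact ConcreteCategory.congr_hom (w ⟨p.1⟩) p.2

lemma theta_app_left_bijective [PreservesColimitsOfShape (Discrete X.left) F] :
    Function.Bijective ((theta F).app X).left := by
  have tX : IsColimit ((Over.forget T).mapCocone (F.mapCocone (cfan X))) :=
    isColimitOfPreserves (Over.forget T) (isColimitOfPreserves F (cfanIsColimit X))
  let e := IsColimit.coconePointUniqueUpToIso (sigmaIsColimit X F) tX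
  have he : ((theta F).app X).left = e.hom := by
    ext p
    exact (ConcreteCategory.congr_hom
      (IsColimit.comp_coconePointUniqueUpToIso_hom (sigmaIsColimit X F) tX ⟨p.1⟩) p.2).symm
  rw [he]
  exact e.toEquiv.bijective

end Colimit

end LinearSpanAux

namespace LinearSpanAux

variable {S T : Type u} (F : Over S ⥤ Over T)

lemma mid_inj {a : S} {m m' : Fam F a} (h : (⟨a, m⟩ : Mid F) = ⟨a, m'⟩) : m = m' := by
  simpa using h

lemma liftP_fst (X : Over S) (p : Σ x : X.left, Fam F (X.hom x)) :
    pullback.fst X.hom (TypeCat.ofHom (sMap F)) ((pullback.lift (TypeCat.ofHom fun (p : Σ x : X.left, Fam F (X.hom x)) => p.1) (TypeCat.ofHom fun (p : Σ x : X.left, Fam F (X.hom x)) => (⟨X.hom p.1, p.2⟩ : Mid F)) rfl) p) = p.1 :=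
  ConcreteCategory.congr_hom (pullback.lift_fst (f := X.hom) (g := TypeCat.ofHom (sMap F)) (TypeCat.ofHom fun (p : Σ x : X.left, Fam F (X.hom x)) => p.1) (TypeCat.ofHom fun (p : Σ x : X.left, Fam F (X.hom x)) => (⟨X.hom p.1, p.2⟩ : Mid F)) rfl) p

lemma liftP_snd (X : Over S) (p : Σ x : X.left, Fam F (X.hom x)) :
    pullback.snd X.hom (TypeCat.ofHom (sMap F)) ((pullback.lift (TypeCat.ofHom fun (p : Σ x : X.left, Fam F (X.hom x)) => p.1) (TypeCat.ofHom fun (p : Σ x : X.left, Fam F (X.hom x)) => (⟨X.hom p.1, p.2⟩ : Mid F)) rfl) p) = ⟨X.hom p.1, p.2⟩ :=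
  ConcreteCategory.congr_hom (pullback.lift_snd (f := X.hom) (g := TypeCat.ofHom (sMap F)) (TypeCat.ofHom fun (p : Σ x : X.left, Fam F (X.hom x)) => p.1) (TypeCat.ofHom fun (p : Σ x : X.left, Fam F (X.hom x)) => (⟨X.hom p.1, p.2⟩ : Mid F)) rfl) p

/-- The comparison map from the explicit span functor to pullback-then-map. -/
noncomputable def upsilon :
    P F ⟶ Over.pullbackType (sMap F) ⋙ Over.map (TypeCat.ofHom (tMap F) : Mid F ⟶ T) where
  app X := Over.homMk
    (pullback.lift (TypeCat.ofHom fun (p : Σ x : X.left, Fam F (X.hom x)) => p.1) (TypeCat.ofHom fun (p : Σ x : X.left, Fam F (X.hom x)) => (⟨X.hom p.1, p.2⟩ : Mid F)) rfl)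
    (by
      show pullback.lift _ _ _ ≫ pullback.snd X.hom (TypeCat.ofHom (sMap F)) ≫ (TypeCat.ofHom (tMap F)) = _
      ext p
      exact congrArg (tMap F) (liftP_snd F X p))
  naturality {X Y} f := by
    apply Over.OverMorphism.ext
    show ((P F).map f).left ≫ pullback.lift _ _ _
      = pullback.lift _ _ _ ≫ ((Over.pullback (TypeCat.ofHom (sMap F))).map f).left
    apply pullback.hom_ext
    · simp only [Category.assoc, pullback.lift_fst, pullback.lift_fst_assoc,
        Over.pullback_map_left]
      ext p
      exact (liftP_fst F Y _).trans (congrArg f.left (liftP_fst F X p)).symm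
    · simp only [Category.assoc, pullback.lift_snd, Over.pullback_map_left]
      ext p
      exact (liftP_snd F Y _).trans ((mk_mapE F (ConcreteCategory.congr_hom (Over.w f) p.1).symm p.2).trans (liftP_snd F X p).symm)

lemma upsilon_app_left_fst (X : Over S) (p : Σ x : X.left, Fam F (X.hom x)) :
    pullback.fst X.hom (TypeCat.ofHom (sMap F)) (((upsilon F).app X).left p) = p.1 :=
  ConcreteCategory.congr_hom (pullback.lift_fst (f := X.hom) (g := TypeCat.ofHom (sMap F))
    (TypeCat.ofHom fun p : Σ x : X.left, Fam F (X.hom x) => p.1) (TypeCat.ofHom fun (p : Σ x : X.left, Fam F (X.hom x)) => (⟨X.hom p.1, p.2⟩ : Mid F)) rfl) p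

lemma upsilon_app_left_snd (X : Over S) (p : Σ x : X.left, Fam F (X.hom x)) :
    pullback.snd X.hom (TypeCat.ofHom (sMap F)) (((upsilon F).app X).left p) = ⟨X.hom p.1, p.2⟩ :=
  ConcreteCategory.congr_hom (pullback.lift_snd (f := X.hom) (g := TypeCat.ofHom (sMap F))
    (TypeCat.ofHom fun p : Σ x : X.left, Fam F (X.hom x) => p.1) (TypeCat.ofHom fun (p : Σ x : X.left, Fam F (X.hom x)) => (⟨X.hom p.1, p.2⟩ : Mid F)) rfl) p

lemma upsilon_app_left_bijective (X : Over S) :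
    Function.Bijective ((upsilon F).app X).left := by
  constructor
  · intro p p' hpp
    have h1 : p.1 = p'.1 := by
      rw [← upsilon_app_left_fst F X p, ← upsilon_app_left_fst F X p', hpp]
    have h2 : (⟨X.hom p.1, p.2⟩ : Mid F) = ⟨X.hom p'.1, p'.2⟩ := by
      rw [← upsilon_app_left_snd F X p, ← upsilon_app_left_snd F X p', hpp]
    obtain ⟨x, m⟩ := p
    obtain ⟨x', m'⟩ := p'
    dsimp only at h1
    subst h1
    exact congrArg (Sigma.mk x) (mid_inj F h2)
  · intro q
    have hq : (pullback.snd X.hom (TypeCat.ofHom (sMap F)) q).1 = X.hom (pullback.fst X.hom (TypeCat.ofHom (sMap F)) q) :=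
      by have hc := ConcreteCategory.congr_hom (pullback.condition (f := X.hom) (g := TypeCat.ofHom (sMap F))) q; exact hc.symm
    refine ⟨⟨pullback.fst X.hom (TypeCat.ofHom (sMap F)) q, mapE F hq (pullback.snd X.hom (TypeCat.ofHom (sMap F)) q).2⟩, ?_⟩
    apply PullbackCone.IsLimit.type_ext (pullbackIsPullback X.hom (TypeCat.ofHom (sMap F)))
    · show pullback.fst X.hom (TypeCat.ofHom (sMap F)) _ = pullback.fst X.hom (TypeCat.ofHom (sMap F)) q
      rw [upsilon_app_left_fst]
    · show pullback.snd X.hom (TypeCat.ofHom (sMap F)) _ = pullback.snd X.hom (TypeCat.ofHom (sMap F)) q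
      rw [upsilon_app_left_snd]
      exact mk_mapE F hq (pullback.snd X.hom (TypeCat.ofHom (sMap F)) q).2

end LinearSpanAux

/-- Every linear functor (i.e. coproduct-preserving functor) between slice
categories of types is given by a span: if `F : Over S ⥤ Over T` preserves all
small coproducts, then there is a span `S ←s M →t T` such that `F` is naturally
isomorphic to pullback along `s` followed by postcomposition with `t`. -/
theorem linear_functor_is_span {S T : Type u} (F : Over S ⥤ Over T)
    (h : ∀ J : Type u, PreservesColimitsOfShape (Discrete J) F) :
    ∃ (M : Type u) (s : M → S) (t : M → T),
      Nonempty (F ≅ Over.pullbackType s ⋙ Over.map (TypeCat.ofHom t : M ⟶ T)) := by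
  refine ⟨LinearSpanAux.Mid F, LinearSpanAux.sMap F, LinearSpanAux.tMap F, ?_⟩
  haveI : ∀ X : Over S, IsIso ((LinearSpanAux.theta F).app X) := fun X => by
    haveI := h X.left
    haveI : IsIso ((Over.forget T).map ((LinearSpanAux.theta F).app X)) :=
      (isIso_iff_bijective _).mpr (LinearSpanAux.theta_app_left_bijective X F)
    exact isIso_of_reflects_iso _ (Over.forget T)
  haveI : IsIso (LinearSpanAux.theta F) := NatIso.isIso_of_isIso_app _
  haveI : ∀ X : Over S, IsIso ((LinearSpanAux.upsilon F).app X) := fun X => by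
    haveI : IsIso ((Over.forget T).map ((LinearSpanAux.upsilon F).app X)) :=
      (isIso_iff_bijective _).mpr (LinearSpanAux.upsilon_app_left_bijective F X)
    exact isIso_of_reflects_iso _ (Over.forget T)
  haveI : IsIso (LinearSpanAux.upsilon F) := NatIso.isIso_of_isIso_app _
  exact ⟨(asIso (LinearSpanAux.theta F)).symm ≪≫ asIso (LinearSpanAux.upsilon F)⟩
end

section
/- (Set-level content of Lemma 5.4.) Let F, G : Type ⥤ Type be functors and θ : F ⟶ G a cartesian natural transformation, i.e. one for which every naturality square is a pullback square of types. If the component θ at PUnit, θ_PUnit : F PUnit → G PUnit, has finite fibres (the preimage of every point is finite), then for every type A the component θ_A : F A → G A has finite fibres. -/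
open CategoryTheory

universe u

/-- `f` embeds the fibre of `p` over `z` into the fibre of `q` over `g z`. -/
theorem Finite.fibre_of_comparison_injective {X Y Z W : Type*} {p : X → Z} {q : Y → W}
    {f : X → Y} {g : Z → W} (hcomm : ∀ x, q (f x) = g (p x))
    (hinj : Function.Injective fun x => (p x, f x)) (z : Z) [Finite {y // q y = g z}] :
    Finite {x // p x = z} :=
  Finite.of_injective (fun x : {x // p x = z} => (⟨f x, by rw [hcomm, x.2]⟩ : {y // q y = g z}))
    fun a b hab => Subtype.ext <| hinj <| Prod.ext (a.2.trans b.2.symm) (congrArg Subtype.val hab)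

/-- If `θ : F ⟶ G` is a cartesian natural transformation between endofunctors of
types (every naturality square is a pullback square of types) and the component
`θ_PUnit` has finite fibres, then every component `θ_A` has finite fibres. -/
theorem finite_fibres_of_cartesian {F G : Type u ⥤ Type u} (θ : F ⟶ G)
    (hcart : ∀ {A B : Type u} (h : A → B),
      Function.Bijective fun x : F.obj A =>
        (⟨(θ.app A x, F.map (TypeCat.ofHom h) x), (NatTrans.naturality_apply θ (TypeCat.ofHom h) x).symm⟩ :
          {q : G.obj A × F.obj B // G.map (TypeCat.ofHom h) q.1 = θ.app B q.2}))
    (hfin : ∀ y : G.obj PUnit, Finite {x : F.obj PUnit // θ.app PUnit x = y}) :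
    ∀ (A : Type u) (y : G.obj A), Finite {x : F.obj A // θ.app A x = y} := by
  intro A y
  let toPUnit : A ⟶ PUnit := TypeCat.ofHom fun _ => PUnit.unit
  have := hfin (G.map toPUnit y)
  exact Finite.fibre_of_comparison_injective (NatTrans.naturality_apply θ toPUnit)
    (Subtype.val_injective.comp (hcart _).injective) y
end

section
/- Inert maps of trees are injective: let T = (A, M, N, s, p, t) and T' = (A', M', N', s', p', t') be trees, and let (α : A → A', β : M → M', γ : N → N') be an inert morphism, i.e. s' ∘ β = α ∘ s, p' ∘ β = γ ∘ p, t' ∘ γ = α ∘ t, and the middle square is a pullback in the sense that for every n : N the map β restricts to a bijection from the fibre p⁻¹(n) to the fibre p'⁻¹(γ n). Then α, β and γ are all injective. -/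
/-- A finite rooted (operadic) tree: finite types `A` (edges), `M`, `N` (nodes)
with maps `s : M → A`, `p : M → N`, `t : N → A` such that `t` is injective, `s` is
injective with singleton complement (the root), and the walk-to-the-root function
`σ` (defined by `σ(root) = root` and `σ(s e) = t (p e)`) reaches the root from
every edge in finitely many steps. -/
structure OperadicTree where
  A : Type
  M : Type
  N : Type
  finA : Finite A
  finM : Finite M
  finN : Finite N
  s : M → A
  p : M → N
  t : N → A
  t_inj : Function.Injective t
  s_inj : Function.Injective s
  root : A
  root_not_mem : root ∉ Set.range s
  mem_range_of_ne_root : ∀ a : A, a ≠ root → a ∈ Set.range s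
  σ : A → A
  σ_root : σ root = root
  σ_s : ∀ e : M, σ (s e) = t (p e)
  reaches_root : ∀ a : A, ∃ k : ℕ, σ^[k] a = root

/-!
Away from the root, `α` intertwines the walks to the root: `σ' (α a) = α (σ a)`. Hence if
`α c = α root` with `c ≠ root`, walking `d ≥ 1` steps from `α c` (where `d` is the depth of `c`)
returns to `α c`, which is then a periodic point of `σ'` other than the root, although it
eventually reaches the fixed point `root'`. So only the root is sent to `α root`. Injectivity of
`α` then follows by induction on the depth: two non-root edges `s e`, `s f` with the same image
have `β e = β f` and, by induction, `σ (s e) = σ (s f)`, i.e. `p e = p f`; the pullback condition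
gives `e = f`. Injectivity of `β` and `γ` is inherited from that of `α`, `s'` and `t'`.
-/

namespace Function

variable {X Y : Type*}

theorem IsPeriodicPt.eq_of_iterate_eq_of_isFixedPt {f : X → X} {n K : ℕ} {x r : X}
    (hx : IsPeriodicPt f n x) (hn : 0 < n) (hr : IsFixedPt f r) (hK : f^[K] x = r) : x = r := by
  obtain ⟨m, rfl⟩ := Nat.exists_eq_add_one_of_ne_zero hn.ne'
  calc x = f^[(m + 1) * K] x := (hx.mul_const K).eq.symm
    _ = f^[m * K] (f^[K] x) := by rw [add_one_mul, iterate_add_apply]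
    _ = r := by rw [hK, (hr.iterate _).eq]

theorem iterate_apply_map_of_forall_lt {f : X → X} {g : Y → Y} {φ : X → Y} {S : Set X}
    (h : ∀ x ∈ S, g (φ x) = φ (f x)) :
    ∀ {k : ℕ} {x : X}, (∀ j < k, f^[j] x ∈ S) → g^[k] (φ x) = φ (f^[k] x)
  | 0, _, _ => rfl
  | k + 1, x, hx => by
    rw [iterate_succ_apply, iterate_succ_apply, h x (hx 0 k.succ_pos)]
    exact iterate_apply_map_of_forall_lt h fun j hj => by
      simpa only [iterate_succ_apply] using hx (j + 1) (by omega)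

end Function

namespace OperadicTree

open Function

section InertMap

variable {T T' : OperadicTree} {α : T.A → T'.A} {β : T.M → T'.M} {γ : T.N → T'.N}

theorem map_ne_root (hs : T'.s ∘ β = α ∘ T.s) {a : T.A} (ha : a ≠ T.root) : α a ≠ T'.root := by
  obtain ⟨e, rfl⟩ := T.mem_range_of_ne_root a ha
  exact fun h => T'.root_not_mem ⟨β e, (congrFun hs e).trans h⟩

theorem σ_map (hs : T'.s ∘ β = α ∘ T.s) (hp : T'.p ∘ β = γ ∘ T.p) (ht : T'.t ∘ γ = α ∘ T.t)
    {a : T.A} (ha : a ≠ T.root) : T'.σ (α a) = α (T.σ a) := by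
  obtain ⟨e, rfl⟩ := T.mem_range_of_ne_root a ha
  have hse : T'.s (β e) = α (T.s e) := congrFun hs e
  rw [← hse, T'.σ_s, T.σ_s]
  exact (congrArg T'.t (congrFun hp e)).trans (congrFun ht (T.p e))

theorem eq_root_of_map_eq_map_root (hs : T'.s ∘ β = α ∘ T.s) (hp : T'.p ∘ β = γ ∘ T.p)
    (ht : T'.t ∘ γ = α ∘ T.t) {c : T.A} (hc : α c = α T.root) : c = T.root := by
  classical
  by_contra hcr
  let d := Nat.find (T.reaches_root c)
  have hd : 0 < d := (Nat.find_pos _).2 (by simpa only [iterate_zero_apply] using hcr)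
  have hperiodic : IsPeriodicPt T'.σ d (α c) := by
    rw [IsPeriodicPt, IsFixedPt,
      iterate_apply_map_of_forall_lt (f := T.σ) (g := T'.σ) (φ := α) (S := {a | a ≠ T.root})
        (fun _ ha => σ_map hs hp ht ha) fun j hj => Nat.find_min (T.reaches_root c) hj,
      Nat.find_spec (T.reaches_root c), hc]
  obtain ⟨K, hK⟩ := T'.reaches_root (α c)
  exact map_ne_root hs hcr (hperiodic.eq_of_iterate_eq_of_isFixedPt hd T'.σ_root hK)

theorem map_injective (hs : T'.s ∘ β = α ∘ T.s) (hp : T'.p ∘ β = γ ∘ T.p)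
    (ht : T'.t ∘ γ = α ∘ T.t)
    (hpb : ∀ n : T.N, Bijective fun e : {e : T.M // T.p e = n} =>
      (⟨β e.1, (congrFun hp e.1).trans (congrArg γ e.2)⟩ : {e' : T'.M // T'.p e' = γ n})) :
    Injective α := by
  intro a b hab
  obtain ⟨k, hk⟩ := T.reaches_root a
  induction k generalizing a b with
  | zero =>
    rw [iterate_zero_apply] at hk
    subst hk
    exact (eq_root_of_map_eq_map_root hs hp ht hab.symm).symm
  | succ k ih =>
    rcases eq_or_ne a T.root with rfl | ha
    · exact (eq_root_of_map_eq_map_root hs hp ht hab.symm).symm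
    rcases eq_or_ne b T.root with rfl | hb
    · exact eq_root_of_map_eq_map_root hs hp ht hab
    obtain ⟨e, rfl⟩ := T.mem_range_of_ne_root a ha
    obtain ⟨f, rfl⟩ := T.mem_range_of_ne_root b hb
    have hβ : β e = β f := T'.s_inj ((congrFun hs e).trans (hab.trans (congrFun hs f).symm))
    have hσ : T.σ (T.s e) = T.σ (T.s f) :=
      ih (by rw [← σ_map hs hp ht ha, ← σ_map hs hp ht hb, hab])
        (by rwa [iterate_succ_apply] at hk)
    have hpe : T.p e = T.p f := T.t_inj (by rwa [T.σ_s, T.σ_s] at hσ)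
    have hfibre := (hpb (T.p f)).injective (a₁ := ⟨e, hpe⟩) (a₂ := ⟨f, rfl⟩) (Subtype.ext hβ)
    exact congrArg (fun e => T.s e.1) hfibre

end InertMap

end OperadicTree

/-- Inert maps of trees are injective: if `(α, β, γ)` is an inert morphism of
trees (commuting with the structure maps, with the middle square a pullback in the
sense that `β` restricts to a bijection on the fibres of `p`), then `α`, `β` and
`γ` are injective. -/
theorem inert_map_injective (T T' : OperadicTree)
    (α : T.A → T'.A) (β : T.M → T'.M) (γ : T.N → T'.N)
    (hs : T'.s ∘ β = α ∘ T.s)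
    (hp : T'.p ∘ β = γ ∘ T.p)
    (ht : T'.t ∘ γ = α ∘ T.t)
    (hpb : ∀ n : T.N, Function.Bijective fun e : {e : T.M // T.p e = n} =>
      (⟨β e.1, (congrFun hp e.1).trans (congrArg γ e.2)⟩ :
        {e' : T'.M // T'.p e' = γ n})) :
    Function.Injective α ∧ Function.Injective β ∧ Function.Injective γ := by
  have hα := OperadicTree.map_injective hs hp ht hpb
  exact ⟨hα, Function.Injective.of_comp (f := T'.s) (hs ▸ hα.comp T.s_inj),
    Function.Injective.of_comp (f := T'.t) (ht ▸ hα.comp T.t_inj)⟩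
end

section
/- The level construction yields n-level trees: let n be a natural number, let A₀, …, A_n be finite types with A₀ a singleton, and let f_i : A_i → A_{i−1} be maps for 1 ≤ i ≤ n. Set A = Σ_{i=0}^{n} A_i, M = Σ_{i=1}^{n} A_i, N = Σ_{i=0}^{n−1} A_i, let s : M → A and t : N → A be the evident inclusions, and let p : M → N send (i, a) to (i−1, f_i a). Then (A, M, N, s, p, t) satisfies the three tree axioms; moreover, for each edge (i, a), the least k with σ^[k](i,a) equal to the root is i (so all edges have height ≤ n), and the leaves (the edges not in the image of t) are exactly the elements of A_n: the tree is an n-level tree. -/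
open scoped Classical

/-!
Every edge `(i, x)` with `i ≠ 0` is `s (i - 1, x)`, and every edge `(i, x)` with `i ≠ n` is
`t (i, x)`; so the root is the only edge outside the range of `s`, and the leaves are the edges on
level `n`. The walk to the root lowers the level by one (truncated at `0`), and the root is the only
edge on level `0`, because `A₀` is a singleton. Hence `σ^[k] (i, x)` is the root exactly when
`i ≤ k`.
-/

namespace LevelTree

variable {n : ℕ} {A : Fin (n + 1) → Type*}

def src : (Σ i : Fin n, A i.succ) → Σ i, A i :=
  Sigma.map Fin.succ fun _ => id

def tgt : (Σ i : Fin n, A i.castSucc) → Σ i, A i :=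
  Sigma.map Fin.castSucc fun _ => id

def parent (f : (i : Fin n) → A i.succ → A i.castSucc) (m : Σ i : Fin n, A i.succ) :
    Σ i : Fin n, A i.castSucc :=
  ⟨m.1, f m.1 m.2⟩

/-- Unfolding `Function.extend` gives literally the `σ` of the tree axioms. -/
noncomputable def walk (f : (i : Fin n) → A i.succ → A i.castSucc) :
    (Σ i, A i) → Σ i, A i :=
  Function.extend src (tgt ∘ parent f) id

theorem src_injective : Function.Injective (src (A := A)) :=
  (Fin.succ_injective n).sigma_map fun _ => Function.injective_id

theorem tgt_injective : Function.Injective (tgt (A := A)) :=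
  (Fin.castSucc_injective n).sigma_map fun _ => Function.injective_id

theorem mem_range_src_iff {a : Σ i, A i} : a ∈ Set.range src ↔ a.1 ≠ 0 := by
  obtain ⟨i, x⟩ := a
  constructor
  · rintro ⟨⟨j, y⟩, hj⟩
    exact (congrArg Sigma.fst hj).symm ▸ Fin.succ_ne_zero j
  · intro hi
    obtain ⟨j, rfl⟩ := Fin.exists_succ_eq.mpr hi
    exact ⟨⟨j, x⟩, rfl⟩

theorem mem_range_tgt_iff {a : Σ i, A i} : a ∈ Set.range tgt ↔ (a.1 : ℕ) ≠ n := by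
  obtain ⟨i, x⟩ := a
  constructor
  · rintro ⟨⟨j, y⟩, hj⟩
    exact (congrArg (fun e : Σ i, A i => (e.1 : ℕ)) hj).symm ▸ j.isLt.ne
  · intro hi
    obtain ⟨j, rfl⟩ := Fin.exists_castSucc_eq.mpr fun h => hi (congrArg Fin.val h)
    exact ⟨⟨j, x⟩, rfl⟩

theorem eq_root_iff_fst_eq_zero [Unique (A 0)] {a : Σ i, A i} :
    a = ⟨0, default⟩ ↔ a.1 = 0 := by
  obtain ⟨i, x⟩ := a
  constructor
  · rintro ⟨⟩
    rfl
  · rintro rfl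
    rw [Unique.eq_default x]

variable (f : (i : Fin n) → A i.succ → A i.castSucc)

theorem walk_src (m : Σ i : Fin n, A i.succ) : walk f (src m) = tgt (parent f m) :=
  src_injective.extend_apply _ _ m

theorem walk_of_not_mem_range_src {a : Σ i, A i} (ha : a ∉ Set.range src) : walk f a = a :=
  Function.extend_apply' _ _ a ha

theorem fst_walk (a : Σ i, A i) : ((walk f a).1 : ℕ) = a.1 - 1 := by
  by_cases ha : a ∈ Set.range src
  · obtain ⟨m, rfl⟩ := ha
    rw [walk_src]
    exact (Nat.add_sub_cancel _ _).symm
  · rw [walk_of_not_mem_range_src f ha, not_not.mp (mt mem_range_src_iff.mpr ha)]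
    rfl

theorem fst_iterate_walk (k : ℕ) (a : Σ i, A i) : (((walk f)^[k] a).1 : ℕ) = a.1 - k := by
  induction k generalizing a with
  | zero => rfl
  | succ k ih =>
    rw [Function.iterate_succ_apply, ih, fst_walk]
    omega

theorem iterate_walk_eq_root_iff [Unique (A 0)] (k : ℕ) (a : Σ i, A i) :
    (walk f)^[k] a = ⟨0, default⟩ ↔ (a.1 : ℕ) ≤ k := by
  rw [eq_root_iff_fst_eq_zero, Fin.ext_iff, fst_iterate_walk, Fin.val_zero,
    Nat.sub_eq_zero_iff_le]

end LevelTree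

open LevelTree in
theorem level_construction_is_n_level_tree_general
    (n : ℕ) (A : Fin (n + 1) → Type) [Unique (A 0)]
    (f : (i : Fin n) → A i.succ → A i.castSucc) :
    let E : Type := (i : Fin (n + 1)) × A i
    let M : Type := (i : Fin n) × A i.succ
    let N : Type := (i : Fin n) × A i.castSucc
    let root : E := ⟨0, default⟩
    let s : M → E := fun m => ⟨m.1.succ, m.2⟩
    let t : N → E := fun m => ⟨m.1.castSucc, m.2⟩
    let p : M → N := fun m => ⟨m.1, f m.1 m.2⟩
    let σ : E → E := fun a => if h : ∃ e, s e = a then t (p h.choose) else a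
    -- axiom (1): `t` is injective
    Function.Injective t ∧
    -- axiom (2): `s` is injective with singleton complement the root
    Function.Injective s ∧ root ∉ Set.range s ∧
      (∀ a : E, a ≠ root → a ∈ Set.range s) ∧
    -- `σ` is the walk-to-the-root function
    σ root = root ∧ (∀ e : M, σ (s e) = t (p e)) ∧
    -- axiom (3), with the height of the edge `(i, x)` exactly `i ≤ n`
    (∀ a : E, σ^[(a.1 : ℕ)] a = root ∧
      ∀ k : ℕ, σ^[k] a = root → (a.1 : ℕ) ≤ k) ∧
    -- the leaves are exactly the elements of `A_n`
    (∀ a : E, a ∉ Set.range t ↔ (a.1 : ℕ) = n) := by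
  have root_not_mem_range_src : (⟨0, default⟩ : Σ i, A i) ∉ Set.range src :=
    fun h => mem_range_src_iff.mp h rfl
  exact ⟨tgt_injective, src_injective, root_not_mem_range_src,
    fun a ha => mem_range_src_iff.mpr (mt eq_root_iff_fst_eq_zero.mpr ha),
    walk_of_not_mem_range_src f root_not_mem_range_src, walk_src f,
    fun a => ⟨(iterate_walk_eq_root_iff f _ a).mpr le_rfl,
      fun k => (iterate_walk_eq_root_iff f k a).mp⟩,
    fun a => mem_range_tgt_iff.not.trans not_not⟩

/-- The level construction yields `n`-level trees: given finite types
`A₀, …, A_n` with `A₀` a singleton and maps `f_i : A_i → A_{i-1}`, the evident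
data on `A = Σᵢ Aᵢ`, `M = Σ_{i=1}^n Aᵢ`, `N = Σ_{i=0}^{n-1} Aᵢ` satisfies the
three tree axioms; moreover the height of an edge `(i, a)` is exactly `i` (so all
edges have height `≤ n`), and the leaves are exactly the elements of `A_n`. -/
theorem level_construction_is_n_level_tree
    (n : ℕ) (A : Fin (n + 1) → Type) [∀ i, Finite (A i)] [Unique (A 0)]
    (f : (i : Fin n) → A i.succ → A i.castSucc) :
    let E : Type := (i : Fin (n + 1)) × A i
    let M : Type := (i : Fin n) × A i.succ
    let N : Type := (i : Fin n) × A i.castSucc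
    let root : E := ⟨0, default⟩
    let s : M → E := fun m => ⟨m.1.succ, m.2⟩
    let t : N → E := fun m => ⟨m.1.castSucc, m.2⟩
    let p : M → N := fun m => ⟨m.1, f m.1 m.2⟩
    let σ : E → E := fun a => if h : ∃ e, s e = a then t (p h.choose) else a
    -- axiom (1): `t` is injective
    Function.Injective t ∧
    -- axiom (2): `s` is injective with singleton complement the root
    Function.Injective s ∧ root ∉ Set.range s ∧
      (∀ a : E, a ≠ root → a ∈ Set.range s) ∧
    -- `σ` is the walk-to-the-root function
    σ root = root ∧ (∀ e : M, σ (s e) = t (p e)) ∧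
    -- axiom (3), with the height of the edge `(i, x)` exactly `i ≤ n`
    (∀ a : E, σ^[(a.1 : ℕ)] a = root ∧
      ∀ k : ℕ, σ^[k] a = root → (a.1 : ℕ) ≤ k) ∧
    -- the leaves are exactly the elements of `A_n`
    (∀ a : E, a ∉ Set.range t ↔ (a.1 : ℕ) = n) :=
  level_construction_is_n_level_tree_general n A f
end

section
/- (Set-level, one-variable form of Theorem 2.1: the free monad on a polynomial endofunctor is given by trees.) Let B be a type and E : B → Type, with associated polynomial endofunctor P(Y) = Σ_{b : B} (E b → Y). For every type X, the W-type over the index type X ⊕ B with branching given by (inl x ↦ Empty, inr b ↦ E b) — that is, the initial algebra of Y ↦ X + P(Y), which is the value at X of the free monad on P — is equivalent to Σ_{t : PTree} (Leaves t → X), the type of P-trees whose leaves are decorated by elements of X. -/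
/-- The type of `P`-trees for the polynomial endofunctor `P(Y) = Σ_{b : B} (E b → Y)`:
the W-type over the index type `PUnit ⊕ B` with branching `Empty` at `inl` (leaf
nodes) and `E b` at `inr b`. -/
def PTree (B : Type) (E : B → Type) : Type :=
  WType (fun x : PUnit ⊕ B => Sum.elim (fun _ => Empty) E x)

/-- The leaves of a `P`-tree: a leaf node has `PUnit` many leaves, and a node
`(b, f)` has `Σ_{e : E b} Leaves (f e)` many. -/
def PTree.Leaves {B : Type} {E : B → Type} : PTree B E → Type
  | WType.mk (Sum.inl _) _ => PUnit
  | WType.mk (Sum.inr b) f => Σ e : E b, PTree.Leaves (f e)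

/-! A term of the free monad is a `P`-tree whose leaves carry elements of `X`: erasing the
labels gives its shape in `PTree B E`, and the labels form a function on the leaves of that
shape. Both translations are structural recursions, mutually inverse by W-induction. -/

namespace PTree

abbrev FreeMonad (B : Type) (E : B → Type) (X : Type) : Type :=
  WType fun x : X ⊕ B => Sum.elim (fun _ => Empty) E x

abbrev Decorated (B : Type) (E : B → Type) (X : Type) : Type :=
  Σ t : PTree B E, (t.Leaves → X)

variable {B : Type} {E : B → Type} {X : Type}

def leaf : PTree B E :=
  WType.mk (Sum.inl PUnit.unit) Empty.elim

def Decorated.node (b : B) (g : E b → Decorated B E X) : Decorated B E X :=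
  ⟨WType.mk (Sum.inr b) fun e => (g e).1, fun l => (g l.1).2 l.2⟩

def toDecorated : FreeMonad B E X → Decorated B E X
  | WType.mk (Sum.inl x) _ => ⟨leaf, fun _ => x⟩
  | WType.mk (Sum.inr b) f => Decorated.node b fun e => toDecorated (f e)

def ofDecorated : (t : PTree B E) → (t.Leaves → X) → FreeMonad B E X
  | WType.mk (Sum.inl _) _, d => WType.mk (Sum.inl (d PUnit.unit)) Empty.elim
  | WType.mk (Sum.inr b) f, d =>
    WType.mk (Sum.inr b) fun e => ofDecorated (f e) fun l => d ⟨e, l⟩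

theorem ofDecorated_toDecorated (w : FreeMonad B E X) :
    ofDecorated (toDecorated w).1 (toDecorated w).2 = w := by
  induction w with
  | mk a f ih =>
    cases a with
    | inl _ => exact congrArg (WType.mk _) (funext fun e => nomatch e)
    | inr b => exact congrArg _ (funext ih)

theorem toDecorated_ofDecorated (t : PTree B E) (d : t.Leaves → X) :
    toDecorated (ofDecorated t d) = ⟨t, d⟩ := by
  induction t with
  | mk a f ih =>
    cases a with
    | inl _ =>
      obtain rfl : f = Empty.elim := funext fun e => nomatch e
      rfl
    | inr b =>
      calc toDecorated (ofDecorated (WType.mk (Sum.inr b) f) d)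
          = Decorated.node b fun e => toDecorated (ofDecorated (f e) fun l => d ⟨e, l⟩) := rfl
        _ = Decorated.node b fun e => ⟨f e, fun l => d ⟨e, l⟩⟩ :=
          congrArg _ (funext fun e => ih e _)
        _ = ⟨WType.mk (Sum.inr b) f, d⟩ := rfl

def freeMonadEquivDecorated : FreeMonad B E X ≃ Decorated B E X where
  toFun := toDecorated
  invFun p := ofDecorated p.1 p.2
  left_inv := ofDecorated_toDecorated
  right_inv p := toDecorated_ofDecorated p.1 p.2

end PTree

/-- The free monad on a polynomial endofunctor is given by trees (set-level,
one-variable): for every type `X`, the initial algebra of `Y ↦ X + P(Y)` — the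
W-type over `X ⊕ B` with branching `(inl x ↦ Empty, inr b ↦ E b)` — is equivalent
to the type of `P`-trees with leaves decorated by elements of `X`. -/
theorem freeMonad_eq_decorated_trees (B : Type) (E : B → Type) (X : Type) :
    Nonempty ((WType fun x : X ⊕ B => Sum.elim (fun _ => Empty) E x) ≃
      Σ t : PTree B E, (t.Leaves → X)) :=
  ⟨PTree.freeMonadEquivDecorated⟩
end
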